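/- arXiv:2008.07972 — 2 statements merged into one kernel-verified Lean document; each statement's English description precedes it below -/
import Mathlib

section
/- Let M ∈ ℝ^{m×n} have rank greater than p, with compact SVD M = UΣVᵀ, and let X̂ = U(:,1:p) Σ̂, where Σ̂ = diag(Σ_{11},…,Σ_{pp}). Then X̂ minimizes (1/2)‖X Xᵀ − M Mᵀ‖_F² over all X ∈ ℝ^{m×p}. -/
open Matrix Finset Filter

/-- Frobenius norm of a real matrix. -/
noncomputable def frob {m n : ℕ} (A : Matrix (Fin m) (Fin n) ℝ) : ℝ :=
  Real.sqrt (∑ i, ∑ j, (A i j) ^ 2)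

/-- Nuclear norm: sum of the singular values, i.e. of the square roots of the
eigenvalues of `Aᵀ * A`. -/
noncomputable def nuclearNorm {m n : ℕ} (A : Matrix (Fin m) (Fin n) ℝ) : ℝ :=
  ∑ i, Real.sqrt ((show (Aᵀ * A).IsHermitian by
    simpa using Matrix.isHermitian_conjTranspose_mul_self A).eigenvalues i)

/-- `σ` is the (decreasingly ordered) vector of singular values of a compact SVD of `A`
with inner dimension `q`. -/
def HasSVD {m n q : ℕ} (A : Matrix (Fin m) (Fin n) ℝ) (σ : Fin q → ℝ) : Prop :=
  (∀ i, 0 ≤ σ i) ∧ Antitone σ ∧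
    ∃ (U : Matrix (Fin m) (Fin q) ℝ) (V : Matrix (Fin n) (Fin q) ℝ),
      Uᵀ * U = 1 ∧ Vᵀ * V = 1 ∧ A = U * Matrix.diagonal σ * Vᵀ

section EYHelpers

/-- Squared Frobenius norm. -/
noncomputable def frobSq {a b : ℕ} (A : Matrix (Fin a) (Fin b) ℝ) : ℝ :=
  ∑ i, ∑ j, (A i j) ^ 2

lemma frobSq_nonneg {a b : ℕ} (A : Matrix (Fin a) (Fin b) ℝ) : 0 ≤ frobSq A := by
  apply Finset.sum_nonneg; intro i _
  apply Finset.sum_nonneg; intro j _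
  positivity

lemma frobSq_transpose {a b : ℕ} (A : Matrix (Fin a) (Fin b) ℝ) : frobSq Aᵀ = frobSq A := by
  rw [frobSq, frobSq, Finset.sum_comm]
  rfl

lemma frobSq_neg {a b : ℕ} (A : Matrix (Fin a) (Fin b) ℝ) : frobSq (-A) = frobSq A := by
  simp [frobSq]

lemma frobSq_eq_trace {a b : ℕ} (A : Matrix (Fin a) (Fin b) ℝ) :
    frobSq A = Matrix.trace (Aᵀ * A) := by
  rw [frobSq, Matrix.trace, Finset.sum_comm]
  simp [Matrix.mul_apply, Matrix.diag, sq]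

lemma frobSq_mul_left_le {b s n : ℕ} (Z : Matrix (Fin b) (Fin s) ℝ) (hZ : Zᵀ * Z = 1)
    (D : Matrix (Fin b) (Fin n) ℝ) : frobSq (Zᵀ * D) ≤ frobSq D := by
  have hPP : Z * Zᵀ * (Z * Zᵀ) = Z * Zᵀ := by
    rw [Matrix.mul_assoc, ← Matrix.mul_assoc Zᵀ Z Zᵀ, hZ, Matrix.one_mul]
  have hE : (1 - Z * Zᵀ) * (1 - Z * Zᵀ) = 1 - Z * Zᵀ := by
    have h2 : (1 - Z * Zᵀ) * (1 - Z * Zᵀ)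
        = 1 - Z * Zᵀ - Z * Zᵀ + Z * Zᵀ * (Z * Zᵀ) := by noncomm_ring
    rw [h2, hPP]; abel
  have ht : (1 - Z * Zᵀ : Matrix (Fin b) (Fin b) ℝ)ᵀ = 1 - Z * Zᵀ := by
    simp [Matrix.transpose_sub, Matrix.transpose_mul]
  have h1 : ((1 - Z * Zᵀ) * D)ᵀ * ((1 - Z * Zᵀ) * D) = Dᵀ * D - (Zᵀ * D)ᵀ * (Zᵀ * D) := by
    calc ((1 - Z * Zᵀ) * D)ᵀ * ((1 - Z * Zᵀ) * D)
        = Dᵀ * ((1 - Z * Zᵀ) * (1 - Z * Zᵀ) * D) := by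
          rw [Matrix.transpose_mul, ht, Matrix.mul_assoc, ← Matrix.mul_assoc (1 - Z * Zᵀ)]
      _ = Dᵀ * D - Dᵀ * (Z * (Zᵀ * D)) := by
          rw [hE, Matrix.sub_mul, Matrix.one_mul, Matrix.mul_sub, Matrix.mul_assoc]
      _ = Dᵀ * D - (Zᵀ * D)ᵀ * (Zᵀ * D) := by
          rw [Matrix.transpose_mul, Matrix.transpose_transpose, Matrix.mul_assoc]
  have key : frobSq D - frobSq (Zᵀ * D) = frobSq ((1 - Z * Zᵀ) * D) := by
    rw [frobSq_eq_trace D, frobSq_eq_trace (Zᵀ * D), frobSq_eq_trace, h1, Matrix.trace_sub]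
  have hnn := frobSq_nonneg ((1 - Z * Zᵀ) * D)
  linarith

lemma frobSq_mul_right_le {b s n : ℕ} (W : Matrix (Fin b) (Fin s) ℝ) (hW : Wᵀ * W = 1)
    (D : Matrix (Fin n) (Fin b) ℝ) : frobSq (D * W) ≤ frobSq D := by
  have h1 : frobSq (D * W) = frobSq (Wᵀ * Dᵀ) := by
    rw [← frobSq_transpose (D * W), Matrix.transpose_mul]
  rw [h1, ← frobSq_transpose D]
  exact frobSq_mul_left_le W hW Dᵀ

lemma frobSq_conj_le {b s : ℕ} (Z : Matrix (Fin b) (Fin s) ℝ) (hZ : Zᵀ * Z = 1)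
    (C : Matrix (Fin b) (Fin b) ℝ) : frobSq (Zᵀ * C * Z) ≤ frobSq C := by
  calc frobSq (Zᵀ * C * Z) ≤ frobSq (Zᵀ * C) := frobSq_mul_right_le Z hZ _
    _ ≤ frobSq C := frobSq_mul_left_le Z hZ C

/-- Reindexing a truncated sum over `Fin q` as a sum over `Fin t`. -/
lemma sum_ite_lt {q : ℕ} (t : ℕ) (h : t ≤ q) (f : Fin q → ℝ) :
    ∑ i : Fin q, (if (i : ℕ) < t then f i else 0) = ∑ a : Fin t, f (Fin.castLE h a) := by
  rw [← Finset.sum_filter]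
  refine Finset.sum_bij' (fun (i : Fin q) hi => (⟨(i : ℕ), (Finset.mem_filter.mp hi).2⟩ : Fin t))
    (fun a _ => Fin.castLE h a) (fun a ha => Finset.mem_univ _)
    (fun a _ => Finset.mem_filter.mpr ⟨Finset.mem_univ _, a.isLt⟩)
    (fun a ha => rfl) (fun a ha => rfl) (fun a ha => rfl)

/-- Orthonormal basis of the kernel of a matrix, in matrix form. -/
lemma exists_kerONB {a b : ℕ} (Y : Matrix (Fin a) (Fin b) ℝ) :
    ∃ (s : ℕ) (Z : Matrix (Fin b) (Fin s) ℝ),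
      Zᵀ * Z = 1 ∧ Y * Z = 0 ∧ (∀ v : Fin b → ℝ, Y *ᵥ v = 0 → Z *ᵥ (Zᵀ *ᵥ v) = v) ∧
      b ≤ s + a := by
  classical
  let L : EuclideanSpace ℝ (Fin b) →ₗ[ℝ] (Fin a → ℝ) :=
    Y.mulVecLin ∘ₗ (WithLp.linearEquiv 2 ℝ (Fin b → ℝ)).toLinearMap
  have hLapp : ∀ x : EuclideanSpace ℝ (Fin b), L x = Y *ᵥ (fun i => x i) := fun x => rfl
  set K := LinearMap.ker L with hK
  set s := Module.finrank ℝ K with hs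
  let ob : OrthonormalBasis (Fin s) ℝ K := stdOrthonormalBasis ℝ K
  have hmem : ∀ k, Y *ᵥ (fun i => ((ob k : EuclideanSpace ℝ (Fin b))) i) = 0 := by
    intro k
    have h0 : L ((ob k : EuclideanSpace ℝ (Fin b))) = 0 := (ob k).2
    rw [hLapp] at h0
    exact h0
  refine ⟨s, Matrix.of (fun i k => ((ob k : EuclideanSpace ℝ (Fin b))) i), ?_, ?_, ?_, ?_⟩
  · ext k l
    have horth := ob.orthonormal
    rw [orthonormal_iff_ite] at horth
    have h2 := horth k l
    rw [real_inner_comm] at h2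
    rw [Submodule.coe_inner] at h2
    simp only [PiLp.inner_apply, RCLike.inner_apply, conj_trivial] at h2
    rw [Matrix.mul_apply, Matrix.one_apply]
    simpa [Matrix.transpose_apply, Matrix.of_apply] using h2
  · ext j k
    rw [Matrix.mul_apply, Matrix.zero_apply]
    have h2 := congrFun (hmem k) j
    simpa [Matrix.mulVec, dotProduct] using h2
  · intro v hv
    have hvK : WithLp.toLp 2 v ∈ K := by
      rw [hK, LinearMap.mem_ker, hLapp]
      exact hv
    set x : K := ⟨WithLp.toLp 2 v, hvK⟩ with hx
    have hrepr := ob.sum_repr x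
    funext i
    let ev : K →ₗ[ℝ] ℝ := (LinearMap.proj i) ∘ₗ
      (WithLp.linearEquiv 2 ℝ (Fin b → ℝ)).toLinearMap ∘ₗ K.subtype
    have hev : ∀ y : K, ev y = ((y : EuclideanSpace ℝ (Fin b))) i := fun y => rfl
    have h1 := congrArg ev hrepr
    rw [map_sum] at h1
    simp only [_root_.map_smul, smul_eq_mul, hev] at h1
    have hrep : ∀ k, ob.repr x k = ∑ j, ((ob k : EuclideanSpace ℝ (Fin b))) j * v j := by
      intro k
      rw [ob.repr_apply_apply, Submodule.coe_inner]
      simp only [PiLp.inner_apply, RCLike.inner_apply, conj_trivial]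
      exact Finset.sum_congr rfl (fun j _ => mul_comm _ _)
    have h2 : ∀ k, ((Matrix.of fun i k => ((ob k : EuclideanSpace ℝ (Fin b))) i)ᵀ *ᵥ v) k
        = ob.repr x k := by
      intro k
      rw [Matrix.mulVec, dotProduct, hrep k]
      apply Finset.sum_congr rfl
      intro j _
      rfl
    show ((Matrix.of fun i k => ((ob k : EuclideanSpace ℝ (Fin b))) i) *ᵥ
      ((Matrix.of fun i k => ((ob k : EuclideanSpace ℝ (Fin b))) i)ᵀ *ᵥ v)) i = v i
    rw [Matrix.mulVec, dotProduct]
    calc ∑ k, (Matrix.of fun i k => ((ob k : EuclideanSpace ℝ (Fin b))) i) i k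
          * ((Matrix.of fun i k => ((ob k : EuclideanSpace ℝ (Fin b))) i)ᵀ *ᵥ v) k
        = ∑ k, ob.repr x k * ((ob k : EuclideanSpace ℝ (Fin b))) i := by
          apply Finset.sum_congr rfl
          intro k _
          rw [h2 k, Matrix.of_apply]
          ring
      _ = v i := by
          simp only [Submodule.coe_smul, WithLp.ofLp_smul, Pi.smul_apply, smul_eq_mul] at h1
          exact h1
  · have h1 := LinearMap.finrank_range_add_finrank_ker L
    rw [← hK] at h1
    have h2 : Module.finrank ℝ (EuclideanSpace ℝ (Fin b)) = b := by
      simp [finrank_euclideanSpace]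
    have h3 : Module.finrank ℝ (LinearMap.range L) ≤ a := by
      have h4 := Submodule.finrank_le (LinearMap.range L)
      have h5 : Module.finrank ℝ (Fin a → ℝ) = a := by simp
      omega
    omega

/-- Telescoping sum over an interval. -/
lemma sum_Ico_tel (ν : ℕ → ℝ) (aa bb : ℕ) (h : aa ≤ bb) :
    ∑ l ∈ Finset.Ico aa bb, (ν l - ν (l + 1)) = ν aa - ν bb := by
  rw [Finset.sum_Ico_eq_sum_range]
  have h2 := Finset.sum_range_sub' (f := fun j => ν (aa + j)) (n := bb - aa)
  have h3 : aa + (bb - aa) = bb := by omega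
  simp only [Nat.add_zero] at h2
  calc ∑ l ∈ Finset.range (bb - aa), (ν (aa + l) - ν (aa + l + 1))
      = ∑ l ∈ Finset.range (bb - aa), (ν (aa + l) - ν (aa + (l + 1))) := by
        apply Finset.sum_congr rfl; intro l _; rw [Nat.add_assoc]
    _ = ν aa - ν bb := by rw [h2, h3]

lemma range_filter_le (t q : ℕ) :
    (Finset.range q).filter (fun l => t ≤ l) = Finset.Ico t q := by
  ext l
  simp only [Finset.mem_filter, Finset.mem_range, Finset.mem_Ico]
  omega

lemma sandwich_transpose {a b : ℕ} (P : Matrix (Fin a) (Fin b) ℝ) (d : Fin b → ℝ) :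
    (P * Matrix.diagonal d * Pᵀ)ᵀ = P * Matrix.diagonal d * Pᵀ := by
  rw [Matrix.transpose_mul, Matrix.transpose_mul, Matrix.transpose_transpose,
    Matrix.diagonal_transpose, ← Matrix.mul_assoc]

end EYHelpers

section EYCore

/-- Core Eckart–Young type bound: for any `m × pp` matrix `X`, the tail sum of the fourth
powers of the singular values bounds `‖X Xᵀ - U Σ² Uᵀ‖_F²`. -/
lemma ey_core {m q pp : ℕ} (U : Matrix (Fin m) (Fin q) ℝ) (hU : Uᵀ * U = 1)
    (σ : Fin q → ℝ) (hσ0 : ∀ i, 0 ≤ σ i) (hσa : Antitone σ)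
    (X : Matrix (Fin m) (Fin pp) ℝ) :
    ∑ i : Fin q, (if pp ≤ (i : ℕ) then σ i ^ 4 else 0)
      ≤ frobSq (X * Xᵀ - U * Matrix.diagonal (fun i => σ i ^ 2) * Uᵀ) := by
  classical
  obtain ⟨s, Z, hZZ, hXZ, hker, _⟩ := exists_kerONB Xᵀ
  set lam : Fin q → ℝ := fun i => σ i ^ 2 with hlam
  set A := U * Matrix.diagonal lam * Uᵀ with hA
  set B := X * Xᵀ with hB
  set G := Zᵀ * A * Z with hG
  set C := Zᵀ * U with hC
  set H := Cᵀ * C with hH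
  -- Step 1: frobSq G ≤ frobSq (B - A)
  have hZX : Zᵀ * X = 0 := by
    have h0 : (Xᵀ * Z)ᵀ = (0 : Matrix (Fin pp) (Fin s) ℝ)ᵀ := by rw [hXZ]
    simpa [Matrix.transpose_mul] using h0
  have hstep1 : frobSq G ≤ frobSq (B - A) := by
    have hZBZ : Zᵀ * B * Z = 0 := by
      rw [hB, ← Matrix.mul_assoc, hZX, Matrix.zero_mul, Matrix.zero_mul]
    have h1 : Zᵀ * (B - A) * Z = -G := by
      rw [Matrix.mul_sub, Matrix.sub_mul, hZBZ, hG, zero_sub]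
    calc frobSq G = frobSq (-G) := (frobSq_neg G).symm
      _ = frobSq (Zᵀ * (B - A) * Z) := by rw [h1]
      _ ≤ frobSq (B - A) := frobSq_conj_le Z hZZ _
  -- Step 2: frobSq G = ∑ lam i * lam j * (H i j)^2
  have hHsymm : ∀ i j, H j i = H i j := by
    intro i j
    rw [hH, Matrix.mul_apply, Matrix.mul_apply]
    apply Finset.sum_congr rfl
    intro k _
    simp [Matrix.transpose_apply, mul_comm]
  have hGC : G = C * Matrix.diagonal lam * Cᵀ := by
    rw [hG, hA, hC, Matrix.transpose_mul, Matrix.transpose_transpose]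
    simp only [Matrix.mul_assoc]
  have hGsum : frobSq G = ∑ i : Fin q, ∑ j : Fin q, lam i * lam j * (H i j) ^ 2 := by
    have hGsymm : Gᵀ = G := by
      rw [hGC]
      exact sandwich_transpose C lam
    have e2 : Matrix.trace (G * G)
        = Matrix.trace (Matrix.diagonal lam * H * Matrix.diagonal lam * H) := by
      have h3 : G * G = C * (Matrix.diagonal lam * H * Matrix.diagonal lam * Cᵀ) := by
        rw [hGC, hH]
        simp only [Matrix.mul_assoc]
      rw [h3, Matrix.trace_mul_comm]
      have h4 : Matrix.diagonal lam * H * Matrix.diagonal lam * Cᵀ * C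
          = Matrix.diagonal lam * H * Matrix.diagonal lam * H := by
        rw [Matrix.mul_assoc (Matrix.diagonal lam * H * Matrix.diagonal lam) Cᵀ C, ← hH]
      rw [h4]
    have e3 : Matrix.trace (Matrix.diagonal lam * H * Matrix.diagonal lam * H)
        = ∑ i : Fin q, ∑ j : Fin q, lam i * lam j * (H i j) ^ 2 := by
      rw [Matrix.trace]
      have h5 : ∀ i : Fin q, (Matrix.diagonal lam * H * Matrix.diagonal lam * H).diag i
          = ∑ j : Fin q, lam i * lam j * (H i j) ^ 2 := by
        intro i
        rw [Matrix.diag_apply, Matrix.mul_apply]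
        apply Finset.sum_congr rfl
        intro j _
        rw [Matrix.mul_diagonal, Matrix.diagonal_mul, hHsymm i j]
        ring
      rw [Finset.sum_congr rfl (fun i _ => h5 i)]
    rw [frobSq_eq_trace, hGsymm, e2, e3]
  -- Step 3: ν and telescoping
  set ν : ℕ → ℝ := (fun k => if h : k < q then σ (⟨k, h⟩ : Fin q) ^ 4 else 0) with hν
  have hνq : ν q = 0 := by simp [hν]
  have hνval : ∀ i : Fin q, ν (i : ℕ) = σ i ^ 4 := by
    intro i
    simp [hν, i.isLt]
  have hd : ∀ l, 0 ≤ ν l - ν (l + 1) := by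
    intro l
    rw [hν]
    dsimp only
    by_cases h1 : l + 1 < q
    · have hl : l < q := by omega
      rw [dif_pos h1, dif_pos hl]
      have hle : (⟨l, hl⟩ : Fin q) ≤ ⟨l + 1, h1⟩ := by
        rw [Fin.le_def]; simp
      have h2 := hσa hle
      have h3 := hσ0 (⟨l + 1, h1⟩ : Fin q)
      have h4 := pow_le_pow_left₀ h3 h2 4
      linarith
    · rw [dif_neg h1]
      rw [sub_zero]
      split
      · positivity
      · exact le_refl 0

  have htel : ∀ i : Fin q, σ i ^ 4 = ∑ l ∈ Finset.Ico (i : ℕ) q, (ν l - ν (l + 1)) := by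
    intro i
    rw [sum_Ico_tel ν (i : ℕ) q (le_of_lt i.isLt), hνq, sub_zero, hνval]
  have hmaxval : ∀ i j : Fin q, ((max i j : Fin q) : ℕ) = max (i : ℕ) (j : ℕ) := by
    intro i j
    rcases le_total i j with h | h
    · rw [max_eq_right h, Nat.max_eq_right (Fin.le_def.mp h)]
    · rw [max_eq_left h, Nat.max_eq_left (Fin.le_def.mp h)]
  have hmax : ∀ i j : Fin q, ν ((max i j : Fin q) : ℕ) ≤ lam i * lam j := by
    intro i j
    have hik : σ (max i j) ≤ σ i := hσa (le_max_left i j)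
    have hjk : σ (max i j) ≤ σ j := hσa (le_max_right i j)
    have h0 : 0 ≤ σ (max i j) := hσ0 _
    rw [hνval (max i j)]
    have h1 : σ (max i j) * σ (max i j) ≤ σ i * σ j :=
      mul_le_mul hik hjk h0 (hσ0 i)
    have h2 : 0 ≤ σ (max i j) * σ (max i j) := mul_nonneg h0 h0
    have h3 : 0 ≤ σ i * σ j := mul_nonneg (hσ0 i) (hσ0 j)
    show σ (max i j) ^ 4 ≤ σ i ^ 2 * σ j ^ 2
    nlinarith
  -- Step 4: block bound
  have hblock : ∀ l : ℕ, l < q →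
      ((l + 1 - pp : ℕ) : ℝ) ≤ ∑ i : Fin q, ∑ j : Fin q,
        (if (i : ℕ) ≤ l ∧ (j : ℕ) ≤ l then (H i j) ^ 2 else 0) := by
    intro l hl
    have ht : l + 1 ≤ q := hl
    set e : Fin (l + 1) → Fin q := Fin.castLE ht with he
    set U1 := U.submatrix id e with hU1
    set C1 := Zᵀ * U1 with hC1
    have hentry : ∀ a b : Fin (l + 1), (C1ᵀ * C1) a b = H (e a) (e b) := by
      intro a b
      rw [hH, Matrix.mul_apply, Matrix.mul_apply]
      apply Finset.sum_congr rfl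
      intro k _
      have h1 : C1 k a = C k (e a) := by
        rw [hC1, hC, Matrix.mul_apply, Matrix.mul_apply]
        apply Finset.sum_congr rfl
        intro i _
        simp [hU1, Matrix.submatrix_apply]
      have h2 : C1 k b = C k (e b) := by
        rw [hC1, hC, Matrix.mul_apply, Matrix.mul_apply]
        apply Finset.sum_congr rfl
        intro i _
        simp [hU1, Matrix.submatrix_apply]
      simp [Matrix.transpose_apply, h1, h2]
    have hred : (∑ i : Fin q, ∑ j : Fin q,
          (if (i : ℕ) ≤ l ∧ (j : ℕ) ≤ l then (H i j) ^ 2 else 0))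
        = frobSq (C1ᵀ * C1) := by
      rw [frobSq]
      have h1 : ∀ i : Fin q,
          (∑ j : Fin q, if (i : ℕ) ≤ l ∧ (j : ℕ) ≤ l then (H i j) ^ 2 else 0)
          = (if (i : ℕ) < l + 1 then
              (∑ j : Fin q, if (j : ℕ) < l + 1 then (H i j) ^ 2 else 0) else 0) := by
        intro i
        by_cases hi : (i : ℕ) < l + 1
        · rw [if_pos hi]
          apply Finset.sum_congr rfl
          intro j _
          have hi' : (i : ℕ) ≤ l := by omega
          by_cases hj : (j : ℕ) < l + 1
          · rw [if_pos hj, if_pos ⟨hi', by omega⟩]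
          · rw [if_neg hj, if_neg (by omega)]
        · rw [if_neg hi]
          apply Finset.sum_eq_zero
          intro j _
          rw [if_neg (by omega)]
      rw [Finset.sum_congr rfl (fun i _ => h1 i),
        sum_ite_lt (l + 1) ht (f := fun i => ∑ j : Fin q,
          if (j : ℕ) < l + 1 then (H i j) ^ 2 else 0)]
      apply Finset.sum_congr rfl
      intro a _
      rw [sum_ite_lt (l + 1) ht (f := fun j => (H (Fin.castLE ht a) j) ^ 2)]
      apply Finset.sum_congr rfl
      intro b _
      rw [hentry a b]
    obtain ⟨s2, W, hWW, hYW, _, hdim2⟩ := exists_kerONB (Xᵀ * U1)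
    have hU1U1 : U1ᵀ * U1 = 1 := by
      ext a b
      have h1 : (U1ᵀ * U1) a b = (Uᵀ * U) (e a) (e b) := by
        rw [Matrix.mul_apply, Matrix.mul_apply]
        apply Finset.sum_congr rfl
        intro k _
        simp [hU1, Matrix.submatrix_apply]
      rw [h1, hU, Matrix.one_apply, Matrix.one_apply]
      have hinj : Function.Injective e := Fin.castLE_injective ht
      by_cases hab : a = b
      · rw [if_pos (by rw [hab]), if_pos hab]
      · rw [if_neg (fun hc => hab (hinj hc)), if_neg hab]
    have hfix : (C1ᵀ * C1) * W = W := by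
      ext j k
      have hv : Xᵀ *ᵥ (U1 *ᵥ (fun b => W b k)) = 0 := by
        rw [Matrix.mulVec_mulVec]
        have h2 : (Xᵀ * U1) *ᵥ (fun b => W b k) = fun j' => ((Xᵀ * U1) * W) j' k := by
          funext j'
          rw [Matrix.mulVec, dotProduct, Matrix.mul_apply]
        rw [h2, hYW]
        funext j'
        simp
      have hzz := hker _ hv
      have hcol : (C1ᵀ * C1) *ᵥ (fun b => W b k) = (fun b => W b k) := by
        have hc1 : C1 *ᵥ (fun b => W b k) = Zᵀ *ᵥ (U1 *ᵥ (fun b => W b k)) := by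
          rw [Matrix.mulVec_mulVec, hC1]
        have hc2 : C1ᵀ = U1ᵀ * Z := by
          rw [hC1, Matrix.transpose_mul, Matrix.transpose_transpose]
        calc (C1ᵀ * C1) *ᵥ (fun b => W b k)
            = C1ᵀ *ᵥ (C1 *ᵥ (fun b => W b k)) := (Matrix.mulVec_mulVec _ _ _).symm
          _ = (U1ᵀ * Z) *ᵥ (Zᵀ *ᵥ (U1 *ᵥ (fun b => W b k))) := by rw [hc1, hc2]
          _ = U1ᵀ *ᵥ (Z *ᵥ (Zᵀ *ᵥ (U1 *ᵥ (fun b => W b k)))) :=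
              (Matrix.mulVec_mulVec _ _ _).symm
          _ = U1ᵀ *ᵥ (U1 *ᵥ (fun b => W b k)) := by rw [hzz]
          _ = (U1ᵀ * U1) *ᵥ (fun b => W b k) := Matrix.mulVec_mulVec _ _ _
          _ = (fun b => W b k) := by rw [hU1U1, Matrix.one_mulVec]
      have h3 := congrFun hcol j
      simpa [Matrix.mulVec, dotProduct, Matrix.mul_apply] using h3
    have hWfrob : frobSq W = (s2 : ℝ) := by
      rw [frobSq_eq_trace, hWW, Matrix.trace_one]
      simp
    have hle1 : frobSq W ≤ frobSq (C1ᵀ * C1) := by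
      calc frobSq W = frobSq ((C1ᵀ * C1) * W) := by rw [hfix]
        _ ≤ frobSq (C1ᵀ * C1) := frobSq_mul_right_le W hWW _
    have hcast : ((l + 1 - pp : ℕ) : ℝ) ≤ (s2 : ℝ) := by
      have hn : l + 1 - pp ≤ s2 := by omega
      exact_mod_cast hn
    rw [hred]
    linarith
  -- Step 5: assemble
  have hmono : (∑ i : Fin q, ∑ j : Fin q, ν ((max i j : Fin q) : ℕ) * (H i j) ^ 2)
      ≤ ∑ i : Fin q, ∑ j : Fin q, lam i * lam j * (H i j) ^ 2 := by
    apply Finset.sum_le_sum; intro i _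
    apply Finset.sum_le_sum; intro j _
    exact mul_le_mul_of_nonneg_right (hmax i j) (sq_nonneg _)
  have hexp : ∀ i j : Fin q, ν ((max i j : Fin q) : ℕ) * (H i j) ^ 2
      = ∑ l ∈ Finset.range q,
          (if (i : ℕ) ≤ l ∧ (j : ℕ) ≤ l then (ν l - ν (l + 1)) * (H i j) ^ 2 else 0) := by
    intro i j
    have h1 : ν ((max i j : Fin q) : ℕ)
        = ∑ l ∈ Finset.Ico ((max i j : Fin q) : ℕ) q, (ν l - ν (l + 1)) := by
      rw [sum_Ico_tel ν _ q (le_of_lt (max i j).isLt), hνq, sub_zero]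
    rw [h1, Finset.sum_mul, ← range_filter_le, Finset.sum_filter]
    apply Finset.sum_congr rfl
    intro l _
    have hiff : ((max i j : Fin q) : ℕ) ≤ l ↔ ((i : ℕ) ≤ l ∧ (j : ℕ) ≤ l) := by
      rw [hmaxval i j]
      omega
    by_cases hc : ((max i j : Fin q) : ℕ) ≤ l
    · rw [if_pos hc, if_pos (hiff.mp hc)]
    · rw [if_neg hc, if_neg (fun h => hc (hiff.mpr h))]
  have hswap : (∑ i : Fin q, ∑ j : Fin q, ν ((max i j : Fin q) : ℕ) * (H i j) ^ 2)
      = ∑ l ∈ Finset.range q, (ν l - ν (l + 1)) *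
          (∑ i : Fin q, ∑ j : Fin q,
            if (i : ℕ) ≤ l ∧ (j : ℕ) ≤ l then (H i j) ^ 2 else 0) := by
    rw [Finset.sum_congr rfl (fun i (_ : i ∈ Finset.univ) => Finset.sum_congr rfl
      (fun j _ => hexp i j))]
    rw [Finset.sum_congr rfl (fun i (_ : i ∈ Finset.univ) =>
      Finset.sum_comm (s := Finset.univ) (t := Finset.range q))]
    rw [Finset.sum_comm]
    apply Finset.sum_congr rfl
    intro l _
    rw [Finset.mul_sum]
    apply Finset.sum_congr rfl
    intro i _
    rw [Finset.mul_sum]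
    apply Finset.sum_congr rfl
    intro j _
    rw [mul_ite, mul_zero]
  have htarget : (∑ i : Fin q, if pp ≤ (i : ℕ) then σ i ^ 4 else 0)
      = ∑ l ∈ Finset.range q, (ν l - ν (l + 1)) * ((l + 1 - pp : ℕ) : ℝ) := by
    have h1 : ∀ i : Fin q, (if pp ≤ (i : ℕ) then σ i ^ 4 else 0)
        = ∑ l ∈ Finset.range q,
            (if pp ≤ (i : ℕ) ∧ (i : ℕ) ≤ l then (ν l - ν (l + 1)) else 0) := by
      intro i
      by_cases h : pp ≤ (i : ℕ)
      · rw [if_pos h, htel i, ← range_filter_le, Finset.sum_filter]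
        apply Finset.sum_congr rfl
        intro l _
        by_cases h2 : (i : ℕ) ≤ l
        · rw [if_pos h2, if_pos ⟨h, h2⟩]
        · rw [if_neg h2, if_neg (fun hc => h2 hc.2)]
      · rw [if_neg h]
        symm
        apply Finset.sum_eq_zero
        intro l _
        rw [if_neg (fun hc => h hc.1)]
    rw [Finset.sum_congr rfl (fun i (_ : i ∈ Finset.univ) => h1 i), Finset.sum_comm]
    apply Finset.sum_congr rfl
    intro l hl
    have hlq : l + 1 ≤ q := Finset.mem_range.mp hl
    have h2 : (∑ i : Fin q, if pp ≤ (i : ℕ) ∧ (i : ℕ) ≤ l then (ν l - ν (l + 1)) else 0)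
        = ∑ a : Fin (l + 1), (if pp ≤ (a : ℕ) then (ν l - ν (l + 1)) else 0) := by
      have h3 : ∀ i : Fin q, (if pp ≤ (i : ℕ) ∧ (i : ℕ) ≤ l then (ν l - ν (l + 1)) else 0)
          = (if (i : ℕ) < l + 1 then
              (if pp ≤ (i : ℕ) then (ν l - ν (l + 1)) else 0) else 0) := by
        intro i
        by_cases hi : (i : ℕ) < l + 1
        · rw [if_pos hi]
          by_cases hppi : pp ≤ (i : ℕ)
          · rw [if_pos hppi, if_pos ⟨hppi, by omega⟩]
          · rw [if_neg hppi, if_neg (fun hc => hppi hc.1)]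
        · rw [if_neg hi, if_neg (by omega)]
      rw [Finset.sum_congr rfl (fun i (_ : i ∈ Finset.univ) => h3 i),
        sum_ite_lt (l + 1) hlq (f := fun i => if pp ≤ (i : ℕ) then (ν l - ν (l + 1)) else 0)]
      apply Finset.sum_congr rfl
      intro a _
      simp [Fin.coe_castLE]
    rw [h2, Finset.sum_ite, Finset.sum_const, Finset.sum_const_zero, add_zero]
    have hcard : (Finset.univ.filter (fun a : Fin (l + 1) => pp ≤ (a : ℕ))).card
        = l + 1 - pp := by
      rw [← Nat.card_Ico pp (l + 1)]
      apply Finset.card_bij (fun (a : Fin (l + 1)) _ => (a : ℕ))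
      · intro a ha
        rw [Finset.mem_Ico]
        exact ⟨(Finset.mem_filter.mp ha).2, a.isLt⟩
      · intro a _ b _ hab
        exact Fin.val_injective hab
      · intro c hc
        rw [Finset.mem_Ico] at hc
        exact ⟨⟨c, hc.2⟩, Finset.mem_filter.mpr ⟨Finset.mem_univ _, hc.1⟩, rfl⟩
    rw [hcard, nsmul_eq_mul, mul_comm]
  calc ∑ i : Fin q, (if pp ≤ (i : ℕ) then σ i ^ 4 else 0)
      = ∑ l ∈ Finset.range q, (ν l - ν (l + 1)) * ((l + 1 - pp : ℕ) : ℝ) := htarget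
    _ ≤ ∑ l ∈ Finset.range q, (ν l - ν (l + 1)) *
          (∑ i : Fin q, ∑ j : Fin q,
            if (i : ℕ) ≤ l ∧ (j : ℕ) ≤ l then (H i j) ^ 2 else 0) := by
        apply Finset.sum_le_sum
        intro l hl
        exact mul_le_mul_of_nonneg_left (hblock l (Finset.mem_range.mp hl)) (hd l)
    _ = ∑ i : Fin q, ∑ j : Fin q, ν ((max i j : Fin q) : ℕ) * (H i j) ^ 2 := hswap.symm
    _ ≤ ∑ i : Fin q, ∑ j : Fin q, lam i * lam j * (H i j) ^ 2 := hmono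
    _ = frobSq G := hGsum.symm
    _ ≤ frobSq (B - A) := hstep1

end EYCore

/-- If `rank M > p`, then `X̂ = U(:,1:p) Σ̂` (top-`p` left singular vectors scaled by the
top-`p` singular values) minimizes `(1/2)‖X Xᵀ − M Mᵀ‖_F²` over `X ∈ ℝ^{m×p}`. -/
theorem gauss_newton_subproblem_min {m n q p : ℕ}
    (hq : q = min m n) (hpm : p < m) (hpq : p ≤ q)
    (M : Matrix (Fin m) (Fin n) ℝ) (hrank : p < M.rank)
    (U : Matrix (Fin m) (Fin q) ℝ) (V : Matrix (Fin n) (Fin q) ℝ)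
    (σ : Fin q → ℝ) (hσ0 : ∀ i, 0 ≤ σ i) (hσa : Antitone σ)
    (hU : Uᵀ * U = 1) (hV : Vᵀ * V = 1)
    (hM : M = U * Matrix.diagonal σ * Vᵀ) :
    let Xhat : Matrix (Fin m) (Fin p) ℝ :=
      (U.submatrix id (Fin.castLE hpq)) *
        Matrix.diagonal (fun i : Fin p => σ (Fin.castLE hpq i))
    ∀ X : Matrix (Fin m) (Fin p) ℝ,
      (1/2) * frob (Xhat * Xhatᵀ - M * Mᵀ) ^ 2 ≤ (1/2) * frob (X * Xᵀ - M * Mᵀ) ^ 2 := by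
  intro Xhat X
  have hVX : ∀ {k : ℕ} (Xk : Matrix (Fin q) (Fin k) ℝ), Vᵀ * (V * Xk) = Xk := by
    intro k Xk; rw [← Matrix.mul_assoc, hV, Matrix.one_mul]
  have hUX : ∀ {k : ℕ} (Xk : Matrix (Fin q) (Fin k) ℝ), Uᵀ * (U * Xk) = Xk := by
    intro k Xk; rw [← Matrix.mul_assoc, hU, Matrix.one_mul]
  have hMM : M * Mᵀ = U * Matrix.diagonal (fun i => σ i ^ 2) * Uᵀ := by
    rw [hM]
    have h1 : (U * Matrix.diagonal σ * Vᵀ)ᵀ = V * (Matrix.diagonal σ * Uᵀ) := by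
      rw [Matrix.transpose_mul, Matrix.transpose_mul, Matrix.transpose_transpose,
        Matrix.diagonal_transpose]
    rw [h1]
    calc U * Matrix.diagonal σ * Vᵀ * (V * (Matrix.diagonal σ * Uᵀ))
        = U * Matrix.diagonal σ * (Vᵀ * (V * (Matrix.diagonal σ * Uᵀ))) := by
          rw [Matrix.mul_assoc]
      _ = U * Matrix.diagonal σ * (Matrix.diagonal σ * Uᵀ) := by rw [hVX]
      _ = U * (Matrix.diagonal σ * Matrix.diagonal σ) * Uᵀ := by
          simp only [Matrix.mul_assoc]
      _ = U * Matrix.diagonal (fun i => σ i ^ 2) * Uᵀ := by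
          have hdd : Matrix.diagonal σ * Matrix.diagonal σ
              = Matrix.diagonal (fun i => σ i ^ 2) := by
            rw [Matrix.diagonal_mul_diagonal]
            congr 1
            funext i
            simp [pow_two]
          rw [hdd]
  have hXhat : Xhat * Xhatᵀ
      = U * Matrix.diagonal (fun i : Fin q => if (i : ℕ) < p then σ i ^ 2 else 0) * Uᵀ := by
    show (U.submatrix id (Fin.castLE hpq) *
        Matrix.diagonal (fun i : Fin p => σ (Fin.castLE hpq i))) *
      (U.submatrix id (Fin.castLE hpq) *
        Matrix.diagonal (fun i : Fin p => σ (Fin.castLE hpq i)))ᵀ = _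
    ext i j
    rw [Matrix.mul_apply, Matrix.mul_apply]
    have hR : ∀ k : Fin q,
        (U * Matrix.diagonal (fun i : Fin q => if (i : ℕ) < p then σ i ^ 2 else 0)) i k
          * Uᵀ k j
        = (if (k : ℕ) < p then U i k * σ k ^ 2 * U j k else 0) := by
      intro k
      rw [Matrix.mul_diagonal, Matrix.transpose_apply]
      by_cases hk : (k : ℕ) < p
      · rw [if_pos hk, if_pos hk]
      · rw [if_neg hk, if_neg hk]
        ring
    rw [Finset.sum_congr rfl (fun k (_ : k ∈ Finset.univ) => hR k),
      sum_ite_lt p hpq (f := fun k => U i k * σ k ^ 2 * U j k)]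
    apply Finset.sum_congr rfl
    intro a _
    rw [Matrix.transpose_apply, Matrix.mul_diagonal, Matrix.mul_diagonal,
      Matrix.submatrix_apply, Matrix.submatrix_apply, id_eq, id_eq]
    ring
  have hUdiag : ∀ c : Fin q → ℝ, frobSq (U * Matrix.diagonal c * Uᵀ) = ∑ i, (c i) ^ 2 := by
    intro c
    have h1 : (U * Matrix.diagonal c * Uᵀ)ᵀ = U * Matrix.diagonal c * Uᵀ :=
      sandwich_transpose U c
    rw [frobSq_eq_trace, h1]
    have h2 : U * Matrix.diagonal c * Uᵀ * (U * Matrix.diagonal c * Uᵀ)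
        = U * (Matrix.diagonal c * Matrix.diagonal c) * Uᵀ := by
      calc U * Matrix.diagonal c * Uᵀ * (U * Matrix.diagonal c * Uᵀ)
          = U * Matrix.diagonal c * (Uᵀ * (U * (Matrix.diagonal c * Uᵀ))) := by
            simp only [Matrix.mul_assoc]
        _ = U * Matrix.diagonal c * (Matrix.diagonal c * Uᵀ) := by rw [hUX]
        _ = U * (Matrix.diagonal c * Matrix.diagonal c) * Uᵀ := by
            simp only [Matrix.mul_assoc]
    rw [h2, Matrix.diagonal_mul_diagonal, Matrix.trace_mul_comm, hUX,
      Matrix.trace_diagonal]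
    apply Finset.sum_congr rfl
    intro i _
    simp only [Pi.mul_apply, pow_two]
    try ring
  have hdiff : Xhat * Xhatᵀ - M * Mᵀ
      = U * Matrix.diagonal (fun i : Fin q =>
          (if (i : ℕ) < p then σ i ^ 2 else 0) - σ i ^ 2) * Uᵀ := by
    rw [hXhat, hMM, ← Matrix.sub_mul, ← Matrix.mul_sub, Matrix.diagonal_sub]
  have hLHS : frobSq (Xhat * Xhatᵀ - M * Mᵀ)
      = ∑ i : Fin q, (if p ≤ (i : ℕ) then σ i ^ 4 else 0) := by
    rw [hdiff, hUdiag]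
    apply Finset.sum_congr rfl
    intro i _
    by_cases hi : (i : ℕ) < p
    · rw [if_pos hi, if_neg (by omega)]
      ring
    · rw [if_neg hi, if_pos (by omega)]
      ring
  have hfrob2 : ∀ {a b : ℕ} (A : Matrix (Fin a) (Fin b) ℝ), frob A ^ 2 = frobSq A := by
    intro a b A
    rw [frob, frobSq]
    exact Real.sq_sqrt (by positivity)
  rw [hfrob2, hfrob2, hLHS]
  have hcore := ey_core U hU σ hσ0 hσa X
  rw [hMM]
  linarith
end

section
/- For symmetric positive semidefinite matrices: if X ∈ ℝ^{m×p} with p < m has eigenvalues λ_1 ≥ ⋯ ≥ λ_p ≥ 0 of XXᵀ (with λ_{p+1} = ⋯ = λ_m = 0) and MMᵀ has eigenvalues Σ_{11}² ≥ ⋯ ≥ Σ_{qq}² ≥ 0 (padded with zeros), then ‖XXᵀ − MMᵀ‖_F² ≥ Σ_{i=1}^p (λ_i − Σ_{ii}²)² + Σ_{i=p+1}^{q} Σ_{ii}⁴. -/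
open Matrix Finset Filter

section HWhelpers

private lemma tele' (L : ℕ → ℝ) {i mm : ℕ} (h : i ≤ mm) :
    ∑ k ∈ Finset.Ico i mm, (L k - L (k+1)) = L i - L mm := by
  induction mm, h using Nat.le_induction with
  | base => simp
  | succ mm h ih =>
      rw [Finset.sum_Ico_succ_top h, ih]; ring

private lemma filter_range_le' (m i : ℕ) :
    (Finset.range m).filter (fun k => i ≤ k) = Finset.Ico i m := by
  ext k; simp [Finset.mem_filter, Finset.mem_range, Finset.mem_Ico, and_comm]

private lemma sum4_swap (s t : Finset ℕ) (F : ℕ → ℕ → ℕ → ℕ → ℝ) :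
    ∑ i ∈ s, ∑ j ∈ s, ∑ k ∈ t, ∑ l ∈ t, F i j k l
      = ∑ k ∈ t, ∑ l ∈ t, ∑ i ∈ s, ∑ j ∈ s, F i j k l := by
  calc ∑ i ∈ s, ∑ j ∈ s, ∑ k ∈ t, ∑ l ∈ t, F i j k l
      = ∑ i ∈ s, ∑ k ∈ t, ∑ j ∈ s, ∑ l ∈ t, F i j k l :=
        Finset.sum_congr rfl fun i _ => Finset.sum_comm
    _ = ∑ k ∈ t, ∑ i ∈ s, ∑ j ∈ s, ∑ l ∈ t, F i j k l := Finset.sum_comm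
    _ = ∑ k ∈ t, ∑ i ∈ s, ∑ l ∈ t, ∑ j ∈ s, F i j k l :=
        Finset.sum_congr rfl fun k _ => Finset.sum_congr rfl fun i _ => Finset.sum_comm
    _ = ∑ k ∈ t, ∑ l ∈ t, ∑ i ∈ s, ∑ j ∈ s, F i j k l :=
        Finset.sum_congr rfl fun k _ => Finset.sum_comm

/-- Rearrangement inequality for doubly stochastic weights. -/
private lemma key_nat (m : ℕ) (L U : ℕ → ℝ)
    (hLa : ∀ k, L (k+1) ≤ L k) (hUa : ∀ k, U (k+1) ≤ U k)
    (hLm : L m = 0) (hUm : U m = 0) (S : ℕ → ℕ → ℝ) (hS0 : ∀ i j, 0 ≤ S i j)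
    (hrow : ∀ i, i < m → ∑ j ∈ range m, S i j = 1)
    (hcol : ∀ j, j < m → ∑ i ∈ range m, S i j = 1) :
    ∑ i ∈ range m, ∑ j ∈ range m, L i * U j * S i j ≤ ∑ i ∈ range m, L i * U i := by
  set d : ℕ → ℝ := fun k => L k - L (k+1) with hd
  set e : ℕ → ℝ := fun k => U k - U (k+1) with he
  have hd0 : ∀ k, 0 ≤ d k := fun k => sub_nonneg.2 (hLa k)
  have he0 : ∀ k, 0 ≤ e k := fun k => sub_nonneg.2 (hUa k)
  have hLrep : ∀ i ∈ range m, L i = ∑ k ∈ range m, if i ≤ k then d k else 0 := by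
    intro i hi
    rw [Finset.sum_ite, Finset.sum_const_zero, add_zero, filter_range_le',
      tele' L (le_of_lt (mem_range.1 hi)), hLm, sub_zero]
  have hUrep : ∀ i ∈ range m, U i = ∑ k ∈ range m, if i ≤ k then e k else 0 := by
    intro i hi
    rw [Finset.sum_ite, Finset.sum_const_zero, add_zero, filter_range_le',
      tele' U (le_of_lt (mem_range.1 hi)), hUm, sub_zero]
  set T : ℕ → ℕ → ℝ := fun k l => ∑ i ∈ range m, ∑ j ∈ range m,
      if i ≤ k ∧ j ≤ l then S i j else 0 with hT
  set N : ℕ → ℕ → ℝ := fun k l => ∑ i ∈ range m, if i ≤ k ∧ i ≤ l then (1:ℝ) else 0 with hN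
  have cardbound : ∀ r : ℕ, (∑ i ∈ range m, if i ≤ r then (1:ℝ) else 0) ≤ (r:ℝ) + 1 := by
    intro r
    rw [Finset.sum_ite, Finset.sum_const_zero, add_zero, Finset.sum_const,
      nsmul_eq_mul, mul_one]
    have h1 : ((Finset.range m).filter (fun i => i ≤ r)) ⊆ Finset.range (r+1) := by
      intro x hx; simp only [Finset.mem_filter] at hx
      exact Finset.mem_range.2 (Nat.lt_succ_of_le hx.2)
    have := Finset.card_le_card h1
    rw [Finset.card_range] at this
    exact_mod_cast this
  have hTle : ∀ k l, k < m → l < m → T k l ≤ N k l := by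
    intro k l hk hl
    have h2 : N k l = (min k l : ℝ) + 1 := by
      rw [hN]
      simp only [← le_min_iff]
      rw [Finset.sum_ite, Finset.sum_const_zero, add_zero, Finset.sum_const,
        nsmul_eq_mul, mul_one]
      have h3 : ((Finset.range m).filter (fun i => i ≤ min k l)) = Finset.range (min k l + 1) := by
        ext x
        simp only [Finset.mem_filter, Finset.mem_range, Nat.lt_succ_iff]
        exact ⟨fun h => h.2, fun h => ⟨lt_of_le_of_lt h (lt_of_le_of_lt (min_le_left _ _) hk), h⟩⟩
      rw [h3]; simp
    rw [h2]
    rcases le_total k l with hkl | hkl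
    · rw [min_eq_left (Nat.cast_le.2 hkl : (k:ℝ) ≤ l)]
      calc T k l ≤ ∑ i ∈ range m, (if i ≤ k then (1:ℝ) else 0) := by
            apply Finset.sum_le_sum
            intro i hi
            by_cases hik : i ≤ k
            · rw [if_pos hik]
              calc ∑ j ∈ range m, (if i ≤ k ∧ j ≤ l then S i j else 0)
                  ≤ ∑ j ∈ range m, S i j := by
                    apply Finset.sum_le_sum; intro j _
                    by_cases h : i ≤ k ∧ j ≤ l <;> simp [h, hS0]
                _ = 1 := hrow i (mem_range.1 hi)
            · rw [if_neg hik]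
              have : ∀ j ∈ range m, (if i ≤ k ∧ j ≤ l then S i j else 0) = 0 := by
                intro j _; rw [if_neg (fun h => hik h.1)]
              rw [Finset.sum_congr rfl this, Finset.sum_const_zero]
        _ ≤ (k:ℝ) + 1 := cardbound k
    · rw [min_eq_right (Nat.cast_le.2 hkl : (l:ℝ) ≤ k)]
      calc T k l ≤ ∑ j ∈ range m, (if j ≤ l then (1:ℝ) else 0) := by
            simp only [hT]
            rw [show (∑ i ∈ range m, ∑ j ∈ range m, if i ≤ k ∧ j ≤ l then S i j else 0)
              = ∑ j ∈ range m, ∑ i ∈ range m, (if i ≤ k ∧ j ≤ l then S i j else 0)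
              from Finset.sum_comm]
            apply Finset.sum_le_sum
            intro j hj
            by_cases hjl : j ≤ l
            · rw [if_pos hjl]
              calc ∑ i ∈ range m, (if i ≤ k ∧ j ≤ l then S i j else 0)
                  ≤ ∑ i ∈ range m, S i j := by
                    apply Finset.sum_le_sum; intro i _
                    by_cases h : i ≤ k ∧ j ≤ l <;> simp [h, hS0]
                _ = 1 := hcol j (mem_range.1 hj)
            · rw [if_neg hjl]
              have : ∀ i ∈ range m, (if i ≤ k ∧ j ≤ l then S i j else 0) = 0 := by
                intro i _; rw [if_neg (fun h => hjl h.2)]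
              rw [Finset.sum_congr rfl this, Finset.sum_const_zero]
        _ ≤ (l:ℝ) + 1 := cardbound l
  have hLHS : ∑ i ∈ range m, ∑ j ∈ range m, L i * U j * S i j
      = ∑ k ∈ range m, ∑ l ∈ range m, d k * e l * T k l := by
    have step1 : ∑ i ∈ range m, ∑ j ∈ range m, L i * U j * S i j
        = ∑ i ∈ range m, ∑ j ∈ range m, ∑ k ∈ range m, ∑ l ∈ range m,
            d k * e l * (if i ≤ k ∧ j ≤ l then S i j else 0) := by
      apply Finset.sum_congr rfl; intro i hi
      apply Finset.sum_congr rfl; intro j hj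
      rw [hLrep i hi, hUrep j hj, Finset.sum_mul_sum, Finset.sum_mul]
      apply Finset.sum_congr rfl; intro k _
      rw [Finset.sum_mul]
      apply Finset.sum_congr rfl; intro l _
      by_cases h1 : i ≤ k <;> by_cases h2 : j ≤ l <;> simp [h1, h2]
    rw [step1, sum4_swap]
    apply Finset.sum_congr rfl; intro k _
    apply Finset.sum_congr rfl; intro l _
    simp only [hT, Finset.mul_sum]
  have hRHS : ∑ i ∈ range m, L i * U i
      = ∑ k ∈ range m, ∑ l ∈ range m, d k * e l * N k l := by
    have step1 : ∑ i ∈ range m, L i * U i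
        = ∑ i ∈ range m, ∑ k ∈ range m, ∑ l ∈ range m,
            d k * e l * (if i ≤ k ∧ i ≤ l then (1:ℝ) else 0) := by
      apply Finset.sum_congr rfl; intro i hi
      rw [hLrep i hi, hUrep i hi, Finset.sum_mul_sum]
      apply Finset.sum_congr rfl; intro k _
      apply Finset.sum_congr rfl; intro l _
      by_cases h1 : i ≤ k <;> by_cases h2 : i ≤ l <;> simp [h1, h2]
    rw [step1]
    rw [show (∑ i ∈ range m, ∑ k ∈ range m, ∑ l ∈ range m,
            d k * e l * (if i ≤ k ∧ i ≤ l then (1:ℝ) else 0))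
        = ∑ k ∈ range m, ∑ i ∈ range m, ∑ l ∈ range m,
            d k * e l * (if i ≤ k ∧ i ≤ l then (1:ℝ) else 0) from Finset.sum_comm]
    apply Finset.sum_congr rfl; intro k _
    rw [show (∑ i ∈ range m, ∑ l ∈ range m,
            d k * e l * (if i ≤ k ∧ i ≤ l then (1:ℝ) else 0))
        = ∑ l ∈ range m, ∑ i ∈ range m,
            d k * e l * (if i ≤ k ∧ i ≤ l then (1:ℝ) else 0) from Finset.sum_comm]
    apply Finset.sum_congr rfl; intro l _
    simp only [hN, Finset.mul_sum]
  rw [hLHS, hRHS]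
  apply Finset.sum_le_sum; intro k hk
  apply Finset.sum_le_sum; intro l hl
  exact mul_le_mul_of_nonneg_left (hTle k l (mem_range.1 hk) (mem_range.1 hl))
    (mul_nonneg (hd0 k) (he0 l))

private lemma entry_apply {m : ℕ} (W : Matrix (Fin m) (Fin m) ℝ) (a : Fin m → ℝ) (i j : Fin m) :
    (W * Matrix.diagonal a * Wᵀ) i j = ∑ k, W i k * a k * W j k := by
  rw [Matrix.mul_apply]
  apply Finset.sum_congr rfl; intro k _
  rw [Matrix.mul_diagonal, Matrix.transpose_apply]

private lemma sum4_swap' {m : ℕ} (F : Fin m → Fin m → Fin m → Fin m → ℝ) :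
    ∑ i, ∑ j, ∑ k, ∑ l, F i j k l = ∑ k, ∑ l, ∑ i, ∑ j, F i j k l := by
  calc ∑ i, ∑ j, ∑ k, ∑ l, F i j k l
      = ∑ i, ∑ k, ∑ j, ∑ l, F i j k l :=
        Finset.sum_congr rfl fun i _ => Finset.sum_comm
    _ = ∑ k, ∑ i, ∑ j, ∑ l, F i j k l := Finset.sum_comm
    _ = ∑ k, ∑ i, ∑ l, ∑ j, F i j k l :=
        Finset.sum_congr rfl fun k _ => Finset.sum_congr rfl fun i _ => Finset.sum_comm
    _ = ∑ k, ∑ l, ∑ i, ∑ j, F i j k l :=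
        Finset.sum_congr rfl fun k _ => Finset.sum_comm

private lemma entry_sum {m : ℕ} (W P : Matrix (Fin m) (Fin m) ℝ) (a b : Fin m → ℝ) :
    ∑ i, ∑ j, (W * Matrix.diagonal a * Wᵀ) i j * (P * Matrix.diagonal b * Pᵀ) i j
      = ∑ k, ∑ l, a k * b l * ((Wᵀ * P) k l)^2 := by
  have step1 : ∑ i, ∑ j, (W * Matrix.diagonal a * Wᵀ) i j * (P * Matrix.diagonal b * Pᵀ) i j
      = ∑ i, ∑ j, ∑ k, ∑ l, (W i k * a k * W j k) * (P i l * b l * P j l) := by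
    apply Finset.sum_congr rfl; intro i _
    apply Finset.sum_congr rfl; intro j _
    rw [entry_apply, entry_apply, Finset.sum_mul_sum]
  rw [step1, sum4_swap']
  apply Finset.sum_congr rfl; intro k _
  apply Finset.sum_congr rfl; intro l _
  have : ∀ i j : Fin m, (W i k * a k * W j k) * (P i l * b l * P j l)
      = a k * b l * ((W i k * P i l) * (W j k * P j l)) := fun i j => by ring
  simp only [this]
  simp only [← Finset.mul_sum]
  congr 1
  have h : (Wᵀ * P) k l = ∑ i, W i k * P i l := by
    rw [Matrix.mul_apply]; simp [Matrix.transpose_apply]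
  rw [h, sq, Finset.sum_mul]

private lemma diag_one_sum {m : ℕ} (a b : Fin m → ℝ) :
    ∑ k, ∑ l, a k * b l * ((1 : Matrix (Fin m) (Fin m) ℝ) k l)^2 = ∑ k, a k * b k := by
  apply Finset.sum_congr rfl; intro k _
  rw [Finset.sum_eq_single k]
  · simp [Matrix.one_apply]
  · intro l _ hlk; simp [Matrix.one_apply, Ne.symm hlk]
  · simp

private lemma castLE_sum {m p : ℕ} (hpm : p ≤ m) (lam mu : Fin m → ℝ) :
    (∑ i : Fin p, (lam (Fin.castLE hpm i) - mu (Fin.castLE hpm i)) ^ 2)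
      = ∑ i : Fin m, (if (i:ℕ) < p then (lam i - mu i)^2 else 0) := by
  set g : ℕ → ℝ := fun k => if h : k < m then (lam ⟨k,h⟩ - mu ⟨k,h⟩)^2 else 0 with hg
  have h1 : ∑ i : Fin p, (lam (Fin.castLE hpm i) - mu (Fin.castLE hpm i)) ^ 2
      = ∑ k ∈ range p, g k := by
    rw [← Fin.sum_univ_eq_sum_range]
    apply Finset.sum_congr rfl; intro i _
    simp only [hg]; rw [dif_pos (lt_of_lt_of_le i.2 hpm)]; rfl
  have h2 : ∑ i : Fin m, (if (i:ℕ) < p then (lam i - mu i)^2 else 0)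
      = ∑ k ∈ range m, (if k < p then g k else 0) := by
    rw [← Fin.sum_univ_eq_sum_range]
    apply Finset.sum_congr rfl; intro i _
    by_cases h : (i:ℕ) < p
    · rw [if_pos h, if_pos h]; simp only [hg]; rw [dif_pos i.2]
    · rw [if_neg h, if_neg h]
  rw [h1, h2, ← Finset.sum_filter]
  apply Finset.sum_congr _ (fun _ _ => rfl)
  ext x
  simp only [Finset.mem_filter, Finset.mem_range]
  exact ⟨fun h => ⟨lt_of_lt_of_le h hpm, h⟩, fun h => h.2⟩

end HWhelpers

/-- Eigenvalue lower bound: with `λ₁ ≥ ⋯ ≥ λ_p ≥ 0` the eigenvalues of `XXᵀ` (zero past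
`p`) and `μ₁ ≥ μ₂ ≥ ⋯` the (zero-padded) eigenvalues of `MMᵀ` (so `μᵢ = Σᵢᵢ²`),
`‖XXᵀ − MMᵀ‖_F² ≥ ∑_{i=1}^p (λᵢ − Σᵢᵢ²)² + ∑_{i=p+1}^q Σᵢᵢ⁴`. -/
theorem psd_eigenvalue_lower_bound {m n q p : ℕ}
    (hq : q = min m n) (hpm : p < m)
    (X : Matrix (Fin m) (Fin p) ℝ) (M : Matrix (Fin m) (Fin n) ℝ)
    (lam : Fin m → ℝ) (hlam0 : ∀ i, 0 ≤ lam i) (hlamA : Antitone lam)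
    (hlamZ : ∀ i : Fin m, p ≤ (i : ℕ) → lam i = 0)
    (W : Matrix (Fin m) (Fin m) ℝ) (hW : Wᵀ * W = 1)
    (hXX : X * Xᵀ = W * Matrix.diagonal lam * Wᵀ)
    (mu : Fin m → ℝ) (hmu0 : ∀ i, 0 ≤ mu i) (hmuA : Antitone mu)
    (P : Matrix (Fin m) (Fin m) ℝ) (hP : Pᵀ * P = 1)
    (hMM : M * Mᵀ = P * Matrix.diagonal mu * Pᵀ) :
    frob (X * Xᵀ - M * Mᵀ) ^ 2 ≥
      (∑ i : Fin p, (lam (Fin.castLE hpm.le i) - mu (Fin.castLE hpm.le i)) ^ 2)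
        + ∑ i : Fin m, if p ≤ (i : ℕ) ∧ (i : ℕ) < q then mu i ^ 2 else 0 := by
  have hWW : W * Wᵀ = 1 := mul_eq_one_comm.mp hW
  have hPP : P * Pᵀ = 1 := mul_eq_one_comm.mp hP
  set Q : Matrix (Fin m) (Fin m) ℝ := Wᵀ * P with hQ
  have hQQt : Q * Qᵀ = 1 := by
    rw [hQ, Matrix.transpose_mul, Matrix.transpose_transpose]
    calc Wᵀ * P * (Pᵀ * W) = Wᵀ * (P * Pᵀ) * W := by
          simp only [Matrix.mul_assoc]
      _ = 1 := by rw [hPP, Matrix.mul_one, hW]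
  have hQtQ : Qᵀ * Q = 1 := mul_eq_one_comm.mp hQQt
  -- mu vanishes from q on (rank argument)
  have hmuZ : ∀ i : Fin m, q ≤ (i : ℕ) → mu i = 0 := by
    intro i hqi
    by_contra hne
    have hpos : 0 < mu i := lt_of_le_of_ne (hmu0 i) (Ne.symm hne)
    have hn_le : n ≤ (i : ℕ) := by
      have him := i.2
      rcases le_total m n with h | h
      · exfalso
        have hqm : q = m := by rw [hq, min_eq_left h]
        omega
      · have hqn : q = n := by rw [hq, min_eq_right h]
        omega
    have hrank : (Matrix.diagonal mu).rank ≤ n := by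
      have h1 : Matrix.diagonal mu = Pᵀ * (M * Mᵀ) * P := by
        rw [hMM]
        have : Pᵀ * (P * Matrix.diagonal mu * Pᵀ) * P
            = Pᵀ * P * (Matrix.diagonal mu * (Pᵀ * P)) := by
          simp only [Matrix.mul_assoc]
        rw [this, hP, Matrix.mul_one, Matrix.one_mul]
      calc (Matrix.diagonal mu).rank = (Pᵀ * (M * Mᵀ) * P).rank := by rw [← h1]
        _ ≤ (Pᵀ * (M * Mᵀ)).rank := Matrix.rank_mul_le_left _ _
        _ ≤ (M * Mᵀ).rank := Matrix.rank_mul_le_right _ _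
        _ = M.rank := Matrix.rank_self_mul_transpose M
        _ ≤ Fintype.card (Fin n) := Matrix.rank_le_card_width M
        _ = n := Fintype.card_fin n
    have hcard : (i : ℕ) + 1 ≤ Fintype.card {j : Fin m // mu j ≠ 0} := by
      rw [Fintype.card_subtype]
      have hsub : Finset.Iic i ⊆ Finset.univ.filter (fun j => mu j ≠ 0) := by
        intro j hj
        simp only [Finset.mem_filter, Finset.mem_univ, true_and]
        exact ne_of_gt (lt_of_lt_of_le hpos (hmuA (Finset.mem_Iic.1 hj)))
      have := Finset.card_le_card hsub
      rwa [Fin.card_Iic] at this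
    have hdiag := Matrix.rank_diagonal mu
    omega
  -- rewrite the RHS as a full Hoffman-Wielandt sum
  have hRHSeq : (∑ i : Fin p, (lam (Fin.castLE hpm.le i) - mu (Fin.castLE hpm.le i)) ^ 2)
      + (∑ i : Fin m, if p ≤ (i : ℕ) ∧ (i : ℕ) < q then mu i ^ 2 else 0)
      = ∑ i : Fin m, (lam i - mu i)^2 := by
    rw [castLE_sum hpm.le, ← Finset.sum_add_distrib]
    apply Finset.sum_congr rfl; intro i _
    by_cases h1 : (i : ℕ) < p
    · rw [if_pos h1, if_neg (by omega), add_zero]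
    · rw [if_neg h1]
      have hl : lam i = 0 := hlamZ i (le_of_not_gt h1)
      by_cases h2 : (i : ℕ) < q
      · rw [if_pos ⟨le_of_not_gt h1, h2⟩, hl]; ring
      · rw [if_neg (by tauto), hmuZ i (le_of_not_gt h2), hl]; ring
  rw [ge_iff_le, hRHSeq]
  -- expand the Frobenius norm
  set A : Matrix (Fin m) (Fin m) ℝ := W * Matrix.diagonal lam * Wᵀ with hA
  set B : Matrix (Fin m) (Fin m) ℝ := P * Matrix.diagonal mu * Pᵀ with hB
  rw [hXX, hMM]
  have hnn : 0 ≤ ∑ i, ∑ j, ((A - B) i j)^2 :=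
    Finset.sum_nonneg fun i _ => Finset.sum_nonneg fun j _ => sq_nonneg _
  have hfrob : frob (A - B) ^ 2 = ∑ i, ∑ j, ((A - B) i j)^2 := Real.sq_sqrt hnn
  rw [hfrob]
  have hexp : ∑ i, ∑ j, ((A - B) i j)^2
      = (∑ i, ∑ j, A i j * A i j) - 2 * (∑ i, ∑ j, A i j * B i j)
        + (∑ i, ∑ j, B i j * B i j) := by
    have hpt : ∀ i j : Fin m, ((A - B) i j)^2
        = A i j * A i j - 2 * (A i j * B i j) + B i j * B i j := by
      intro i j; rw [Matrix.sub_apply]; ring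
    simp only [hpt, Finset.sum_add_distrib, Finset.sum_sub_distrib, ← Finset.mul_sum]
  rw [hexp]
  have hSA : ∑ i, ∑ j, A i j * A i j = ∑ k, lam k * lam k := by
    rw [hA, entry_sum, hW, diag_one_sum]
  have hSB : ∑ i, ∑ j, B i j * B i j = ∑ k, mu k * mu k := by
    rw [hB, entry_sum, hP, diag_one_sum]
  have hSAB : ∑ i, ∑ j, A i j * B i j = ∑ k, ∑ l, lam k * mu l * (Q k l)^2 := by
    rw [hA, hB, entry_sum]
  rw [hSA, hSB, hSAB]
  have hexpand : ∑ i : Fin m, (lam i - mu i)^2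
      = (∑ i, lam i * lam i) - 2 * (∑ i, lam i * mu i) + ∑ i, mu i * mu i := by
    have hpt : ∀ i : Fin m, (lam i - mu i)^2
        = lam i * lam i - 2 * (lam i * mu i) + mu i * mu i := fun i => by ring
    simp only [hpt, Finset.sum_add_distrib, Finset.sum_sub_distrib, ← Finset.mul_sum]
  rw [hexpand]
  have hkey : ∑ k, ∑ l, lam k * mu l * (Q k l)^2 ≤ ∑ i, lam i * mu i := by
    set L : ℕ → ℝ := fun k => if h : k < m then lam ⟨k, h⟩ else 0 with hL
    set U : ℕ → ℝ := fun k => if h : k < m then mu ⟨k, h⟩ else 0 with hU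
    set S : ℕ → ℕ → ℝ := fun i j =>
      if h : i < m ∧ j < m then (Q ⟨i, h.1⟩ ⟨j, h.2⟩)^2 else 0 with hS
    have hLa : ∀ k, L (k+1) ≤ L k := by
      intro k
      simp only [hL]
      by_cases h1 : k + 1 < m
      · rw [dif_pos h1, dif_pos (by omega)]
        exact hlamA (by simp [Fin.mk_le_mk])
      · rw [dif_neg h1]
        by_cases h2 : k < m
        · rw [dif_pos h2]; exact hlam0 _
        · rw [dif_neg h2]
    have hUa : ∀ k, U (k+1) ≤ U k := by
      intro k
      simp only [hU]
      by_cases h1 : k + 1 < m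
      · rw [dif_pos h1, dif_pos (by omega)]
        exact hmuA (by simp [Fin.mk_le_mk])
      · rw [dif_neg h1]
        by_cases h2 : k < m
        · rw [dif_pos h2]; exact hmu0 _
        · rw [dif_neg h2]
    have hLm : L m = 0 := by simp [hL]
    have hUm : U m = 0 := by simp [hU]
    have hS0 : ∀ i j, 0 ≤ S i j := by
      intro i j
      simp only [hS]
      by_cases h : i < m ∧ j < m
      · rw [dif_pos h]; exact sq_nonneg _
      · rw [dif_neg h]
    have hSval : ∀ (i j : Fin m), S i.1 j.1 = (Q i j)^2 := by
      intro i j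
      simp only [hS]
      rw [dif_pos ⟨i.2, j.2⟩]
    have hrow : ∀ i, i < m → ∑ j ∈ range m, S i j = 1 := by
      intro i hi
      have h1 : ∑ j ∈ range m, S i j = ∑ j : Fin m, (Q ⟨i, hi⟩ j)^2 := by
        rw [← Fin.sum_univ_eq_sum_range]
        apply Finset.sum_congr rfl; intro j _
        exact hSval ⟨i, hi⟩ j
      have h2 : ∑ j : Fin m, (Q ⟨i, hi⟩ j)^2 = (Q * Qᵀ) ⟨i, hi⟩ ⟨i, hi⟩ := by
        rw [Matrix.mul_apply]
        apply Finset.sum_congr rfl; intro j _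
        rw [Matrix.transpose_apply, sq]
      rw [h1, h2, hQQt, Matrix.one_apply_eq]
    have hcol : ∀ j, j < m → ∑ i ∈ range m, S i j = 1 := by
      intro j hj
      have h1 : ∑ i ∈ range m, S i j = ∑ i : Fin m, (Q i ⟨j, hj⟩)^2 := by
        rw [← Fin.sum_univ_eq_sum_range]
        apply Finset.sum_congr rfl; intro i _
        exact hSval i ⟨j, hj⟩
      have h2 : ∑ i : Fin m, (Q i ⟨j, hj⟩)^2 = (Qᵀ * Q) ⟨j, hj⟩ ⟨j, hj⟩ := by
        rw [Matrix.mul_apply]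
        apply Finset.sum_congr rfl; intro i _
        rw [Matrix.transpose_apply, sq]
      rw [h1, h2, hQtQ, Matrix.one_apply_eq]
    have := key_nat m L U hLa hUa hLm hUm S hS0 hrow hcol
    have hLHSconv : ∑ i ∈ range m, ∑ j ∈ range m, L i * U j * S i j
        = ∑ k, ∑ l, lam k * mu l * (Q k l)^2 := by
      rw [← Fin.sum_univ_eq_sum_range]
      apply Finset.sum_congr rfl; intro i _
      rw [← Fin.sum_univ_eq_sum_range]
      apply Finset.sum_congr rfl; intro j _
      rw [hSval i j]
      simp only [hL, hU]
      rw [dif_pos i.2, dif_pos j.2]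
    have hRHSconv : ∑ i ∈ range m, L i * U i = ∑ i : Fin m, lam i * mu i := by
      rw [← Fin.sum_univ_eq_sum_range]
      apply Finset.sum_congr rfl; intro i _
      simp only [hL, hU]
      rw [dif_pos i.2, dif_pos i.2]
    rw [hLHSconv, hRHSconv] at this
    exact this
  linarith [hkey]
end
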